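/- Let a ≥ 1, let V be a positive function on (0, R), and suppose y is a positive solution on (0, R) of the ordinary differential equation y'' + (a/r) y' + V(r) y = 0. Then y is strictly decreasing on (0, R). -/

import Mathlib

open MeasureTheory Metric Set Filter

noncomputable section

/-- `ℝⁿ` as a Euclidean space. -/
abbrev Euc (n : ℕ) := EuclideanSpace ℝ (Fin n)

/-- `(V, W)` is a Bessel pair on `(0, R)`: the ODE
`y'' + ((n-1)/r + V'/V) y' + (W/V) y = 0` has a positive solution on `(0, R)`. -/
def BesselPair (n : ℕ) (V W : ℝ → ℝ) (R : ℝ) : Prop :=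
  ∃ y : ℝ → ℝ, (∀ r ∈ Set.Ioo 0 R, 0 < y r) ∧
    ∀ r ∈ Set.Ioo 0 R,
      deriv (deriv y) r + (((n : ℝ) - 1) / r + deriv V r / V r) * deriv y r
        + W r / V r * y r = 0

/-- The weight `β(V, W; R)` of a Bessel pair. -/
def besselPairWeight (n : ℕ) (V W : ℝ → ℝ) (R : ℝ) : ℝ :=
  sSup {c : ℝ | 0 < c ∧ BesselPair n V (fun r => c * W r) R}

/-- `W` is a Bessel potential on `(0, R)`: for some `c > 0` the equation
`y'' + y'/r + c W y = 0` has a positive solution on `(0, R)`. -/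
def BesselPotential (W : ℝ → ℝ) (R : ℝ) : Prop :=
  ∃ c : ℝ, 0 < c ∧ ∃ y : ℝ → ℝ, (∀ r ∈ Set.Ioo 0 R, 0 < y r) ∧
    ∀ r ∈ Set.Ioo 0 R, deriv (deriv y) r + deriv y r / r + c * W r * y r = 0

/-- The weight `β(W; R)` of a Bessel potential. -/
def besselWeight (W : ℝ → ℝ) (R : ℝ) : ℝ :=
  sSup {c : ℝ | 0 < c ∧ ∃ y : ℝ → ℝ, (∀ r ∈ Set.Ioo 0 R, 0 < y r) ∧
    ∀ r ∈ Set.Ioo 0 R, deriv (deriv y) r + deriv y r / r + c * W r * y r = 0}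

/-- `u ∈ C₀^∞(Ω)`: smooth and compactly supported inside `Ω`. -/
def IsTestOn {n : ℕ} (Ω : Set (Euc n)) (u : Euc n → ℝ) : Prop :=
  ContDiff ℝ (⊤ : ℕ∞) u ∧ HasCompactSupport u ∧ tsupport u ⊆ Ω

/-- `u` is a radial function. -/
def IsRadial {n : ℕ} (u : Euc n → ℝ) : Prop :=
  ∃ g : ℝ → ℝ, ∀ x, u x = g ‖x‖

/-- The Euclidean Laplacian `Δu = ∑ ∂²u/∂xᵢ²`. -/
def lapl {n : ℕ} (u : Euc n → ℝ) (x : Euc n) : ℝ :=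
  ∑ i : Fin n, fderiv ℝ (fun y => fderiv ℝ u y (EuclideanSpace.single i 1)) x
      (EuclideanSpace.single i 1)

/-- Membership in `H¹₀(Ω)`: `u` is an `H¹`-limit of test functions on `Ω`. -/
def MemH10 {n : ℕ} (Ω : Set (Euc n)) (u : Euc n → ℝ) : Prop :=
  ∃ v : ℕ → Euc n → ℝ, (∀ k, IsTestOn Ω (v k)) ∧
    Filter.Tendsto
      (fun k => ∫ x : Euc n, ((v k x - u x) ^ 2 + ‖gradient (v k) x - gradient u x‖ ^ 2))
      Filter.atTop (nhds 0)

/-- Iterated exponential: `iterExp k = e^{e^{⋯^e}}` (`k` times), `iterExp 0 = 1`. -/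
def iterExp : ℕ → ℝ
  | 0 => 1
  | k + 1 => Real.exp (iterExp k)

/-- Iterated logarithm: `iterLog k = log ∘ ⋯ ∘ log` (`k` times). -/
def iterLog : ℕ → ℝ → ℝ
  | 0, t => t
  | k + 1, t => Real.log (iterLog k t)

/-- Lemma 2.6. A positive solution of `y'' + (a/r) y' + V y = 0`
with `a ≥ 1`, `V > 0`, is strictly decreasing on `(0, R)`. -/
theorem stmt2 (R a : ℝ) (ha : 1 ≤ a) (V y : ℝ → ℝ)
    (hV : ∀ r ∈ Set.Ioo 0 R, 0 < V r)
    (hy : ∀ r ∈ Set.Ioo 0 R, 0 < y r)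
    (hy1 : ∀ r ∈ Set.Ioo 0 R, DifferentiableAt ℝ y r)
    (hy2 : ∀ r ∈ Set.Ioo 0 R, DifferentiableAt ℝ (deriv y) r)
    (hode : ∀ r ∈ Set.Ioo 0 R,
      deriv (deriv y) r + a / r * deriv y r + V r * y r = 0) :
    StrictAntiOn y (Set.Ioo 0 R) := by
  have hint : interior (Set.Ioo (0:ℝ) R) = Set.Ioo 0 R := interior_Ioo
  set w : ℝ → ℝ := fun r => r ^ a * deriv y r with hwdef
  have hwderiv : ∀ r ∈ Set.Ioo (0:ℝ) R, HasDerivAt w (-(r ^ a * V r * y r)) r := by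
    intro r hr
    have hr0 : 0 < r := hr.1
    have h1 : HasDerivAt (fun x : ℝ => x ^ a) (a * r ^ (a - 1)) r :=
      Real.hasDerivAt_rpow_const (Or.inl hr0.ne')
    have h2 : HasDerivAt (deriv y) (deriv (deriv y) r) r := (hy2 r hr).hasDerivAt
    have h3 := h1.mul h2
    refine h3.congr_deriv ?_
    have hode' := hode r hr
    have hy'' : deriv (deriv y) r = -(a / r * deriv y r + V r * y r) := by linarith
    rw [hy'']
    have hra : r ^ (a - 1) = r ^ a / r := by
      rw [Real.rpow_sub hr0, Real.rpow_one]
    rw [hra]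
    field_simp
    ring
  have hwanti : StrictAntiOn w (Set.Ioo 0 R) := by
    apply strictAntiOn_of_deriv_neg (convex_Ioo 0 R)
    · exact fun r hr => ((hwderiv r hr).continuousAt).continuousWithinAt
    · intro r hr
      rw [hint] at hr
      rw [(hwderiv r hr).deriv]
      have h1 := hV r hr
      have h2 := hy r hr
      have h3 : 0 < r ^ a := Real.rpow_pos_of_pos hr.1 a
      nlinarith [mul_pos (mul_pos h3 h1) h2]
  have hy' : ∀ r ∈ Set.Ioo 0 R, deriv y r < 0 := by
    intro r0 hr0
    by_contra hcon
    push_neg at hcon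
    set r1 : ℝ := min r0 1 / 2 with hr1def
    have hr0pos : 0 < r0 := hr0.1
    have hm : 0 < min r0 1 := lt_min hr0pos one_pos
    have hr1pos : 0 < r1 := by positivity
    have hr1lt : r1 < r0 := by
      have : min r0 1 ≤ r0 := min_le_left _ _
      have := half_lt_self hr0pos
      simp only [hr1def]
      nlinarith [min_le_left r0 1]
    have hr1le1 : r1 ≤ 1 := by
      have : min r0 1 ≤ 1 := min_le_right _ _
      simp only [hr1def]; linarith
    have hr1mem : r1 ∈ Set.Ioo 0 R := ⟨hr1pos, hr1lt.trans hr0.2⟩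
    have hw0 : 0 ≤ w r0 := by
      have h3 : 0 < r0 ^ a := Real.rpow_pos_of_pos hr0pos a
      simp only [hwdef]
      positivity
    have hc : 0 < w r1 := lt_of_le_of_lt hw0 (hwanti hr1mem hr0 hr1lt)
    set c : ℝ := w r1 with hcdef
    have key : ∀ r ∈ Set.Ioc (0:ℝ) r1, c / r ≤ deriv y r := by
      intro r hr
      have hrpos : 0 < r := hr.1
      have hrmem : r ∈ Set.Ioo 0 R := ⟨hrpos, lt_of_le_of_lt hr.2 (hr1lt.trans hr0.2)⟩
      have hwge : c ≤ w r := by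
        rcases eq_or_lt_of_le hr.2 with he | hl
        · rw [he]
        · exact (hwanti hrmem hr1mem hl).le
      have hrale : r ^ a ≤ r := by
        calc r ^ a ≤ r ^ (1:ℝ) :=
              Real.rpow_le_rpow_of_exponent_ge hrpos (hr.2.trans hr1le1) ha
          _ = r := Real.rpow_one r
      have hrapos : 0 < r ^ a := Real.rpow_pos_of_pos hrpos a
      have h1 : c / r ^ a ≤ deriv y r := by
        rw [div_le_iff₀ hrapos]
        simp only [hwdef] at hwge
        linarith
      have h2 : c / r ≤ c / r ^ a := by
        apply div_le_div_of_nonneg_left hc.le hrapos hrale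
      linarith
    set g : ℝ → ℝ := fun r => y r - c * Real.log r with hgdef
    have hgderiv : ∀ r ∈ Set.Ioo (0:ℝ) r1, HasDerivAt g (deriv y r - c * r⁻¹) r := by
      intro r hr
      have hrmem : r ∈ Set.Ioo 0 R := ⟨hr.1, hr.2.trans (hr1lt.trans hr0.2)⟩
      exact ((hy1 r hrmem).hasDerivAt).sub (((Real.hasDerivAt_log hr.1.ne').const_mul c))
    have hgmono : MonotoneOn g (Set.Ioc 0 r1) := by
      apply monotoneOn_of_deriv_nonneg (convex_Ioc 0 r1)
      · intro r hr
        have hrmem : r ∈ Set.Ioo 0 R := ⟨hr.1, lt_of_le_of_lt hr.2 (hr1lt.trans hr0.2)⟩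
        exact (((hy1 r hrmem).sub ((Real.differentiableAt_log hr.1.ne').const_mul c)).continuousAt).continuousWithinAt
      · intro r hr
        rw [interior_Ioc] at hr
        exact (((hy1 r ⟨hr.1, hr.2.trans (hr1lt.trans hr0.2)⟩).sub
          ((Real.differentiableAt_log hr.1.ne').const_mul c)).differentiableWithinAt)
      · intro r hr
        rw [interior_Ioc] at hr
        rw [(hgderiv r hr).deriv]
        have hk := key r ⟨hr.1, hr.2.le⟩
        have heq : c * r⁻¹ = c / r := by ring
        linarith [heq ▸ hk]
    set t : ℝ := Real.exp (Real.log r1 - y r1 / c - 1) with htdef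
    have htpos : 0 < t := Real.exp_pos _
    have hyr1pos : 0 < y r1 := hy r1 hr1mem
    have htlt : t < r1 := by
      have h1 : Real.log r1 - y r1 / c - 1 < Real.log r1 := by
        have : 0 < y r1 / c := div_pos hyr1pos hc
        linarith
      calc t < Real.exp (Real.log r1) := Real.exp_lt_exp.mpr h1
        _ = r1 := Real.exp_log hr1pos
    have htmem : t ∈ Set.Ioc (0:ℝ) r1 := ⟨htpos, htlt.le⟩
    have hglt := hgmono htmem (Set.right_mem_Ioc.mpr hr1pos) htlt.le
    have hlogt : Real.log t = Real.log r1 - y r1 / c - 1 := by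
      simp only [htdef, Real.log_exp]
    have hytpos : 0 < y t := hy t ⟨htpos, htlt.trans (hr1lt.trans hr0.2)⟩
    have hcc : c * (y r1 / c) = y r1 := by field_simp
    simp only [hgdef, hlogt] at hglt
    nlinarith
  apply strictAntiOn_of_deriv_neg (convex_Ioo 0 R)
  · exact fun r hr => ((hy1 r hr).continuousAt).continuousWithinAt
  · intro r hr
    rw [hint] at hr
    exact hy' r hr
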